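/- arXiv:2109.06748 — 2 statements merged into one kernel-verified Lean document; each statement's English description precedes it below -/
import Mathlib

section
/- For fixed η ∈ (0,1], ψ > 0, and q ∈ (0,1], the limit as U → ∞ of (U-1)·(1-η)·q·(ψ/U)·P_f^C(U), where P_f^C(U) = Σ_{k=0}^{U-2} (1/(k+1))·C(U-2,k)·(ηψ/U)^k·(1-ηψ/U)^(U-2-k), equals ((1-η)/η)·q·(1 - exp(-ηψ)). -/
/-!
With `x = ηψ/U`, the sum `P_f^C(U)` is `∫₀¹ (1 - x + x t)^(U-2) dt`, which evaluates to
`(1 - (1 - x)^(U-1)) / ((U-1) x)`. The factor `(U-1) x` cancels against `(U-1) ψ / U`, leaving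
`(1-η)/η · q · (1 - (1 - ηψ/U)^(U-1))`, and `(1 - ηψ/U)^(U-1) → exp(-ηψ)`.
-/

open Real Filter Finset

/-- The binomial expansion of `∫₀ˣ (t + y)^n dt`. -/
theorem add_pow_succ_sub_pow_succ_eq_sum {K : Type*} [Field K] [CharZero K] (x y : K) (n : ℕ) :
    (x + y) ^ (n + 1) - y ^ (n + 1) =
      (n + 1) * x *
        ∑ k ∈ range (n + 1), 1 / ((k : K) + 1) * (n.choose k : K) * x ^ k * y ^ (n - k) := by
  have hterm : ∀ k ∈ range (n + 1),
      (n + 1) * x * (1 / ((k : K) + 1) * (n.choose k : K) * x ^ k * y ^ (n - k)) =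
        x ^ (k + 1) * y ^ (n + 1 - (k + 1)) * ((n + 1).choose (k + 1) : K) := by
    intro k _
    have hchoose : ((n + 1).choose (k + 1) : K) = (n + 1) * n.choose k / (k + 1) := by
      rw [eq_div_iff (Nat.cast_add_one_ne_zero k)]
      exact_mod_cast (Nat.add_one_mul_choose_eq n k).symm
    rw [Nat.add_sub_add_right, hchoose]
    ring
  rw [mul_sum, sum_congr rfl hterm, add_pow, sum_range_succ']
  simp

theorem tendsto_one_sub_div_pow_pred_exp (c : ℝ) :
    Tendsto (fun U : ℕ => (1 - c / U) ^ (U - 1)) atTop (nhds (exp (-c))) := by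
  have hbase : Tendsto (fun U : ℕ => 1 - c / U) atTop (nhds 1) := by
    simpa using (tendsto_const_div_atTop_nhds_zero_nat c).const_sub 1
  have hpow : Tendsto (fun U : ℕ => (1 - c / U) ^ U) atTop (nhds (exp (-c))) := by
    simpa [sub_eq_add_neg, neg_div] using tendsto_one_add_div_pow_exp (-c)
  have hquot : Tendsto (fun U : ℕ => (1 - c / U) ^ U / (1 - c / U)) atTop (nhds (exp (-c))) := by
    rw [← div_one (exp (-c))]
    exact hpow.div hbase one_ne_zero
  refine hquot.congr' ?_
  filter_upwards [hbase.eventually_ne one_ne_zero, eventually_ge_atTop 1] with U hne hU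
  rw [pow_sub₀ _ hne hU, pow_one, div_eq_mul_inv]

theorem statement4_general (η ψ q : ℝ) (hη : 0 < η) :
    Tendsto (fun U : ℕ =>
        ((U : ℝ) - 1) * (1 - η) * q * (ψ / U) *
          ∑ k ∈ Finset.range (U - 1),
            (1 / ((k : ℝ) + 1)) * ((U - 2).choose k : ℝ) *
              (η * ψ / U) ^ k * (1 - η * ψ / U) ^ (U - 2 - k))
      atTop (nhds ((1 - η) / η * q * (1 - Real.exp (-(η * ψ))))) := by
  have hlim := ((tendsto_one_sub_div_pow_pred_exp (η * ψ)).const_sub 1).const_mul ((1 - η) / η * q)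
  refine hlim.congr' ?_
  filter_upwards [eventually_ge_atTop 2] with U hU
  obtain ⟨n, rfl⟩ := Nat.exists_eq_add_of_le' hU
  have hsum := add_pow_succ_sub_pow_succ_eq_sum (η * ψ / (n + 2 : ℕ)) (1 - η * ψ / (n + 2 : ℕ)) n
  rw [add_sub_cancel, one_pow] at hsum
  simp only [Nat.add_sub_cancel, show n + 2 - 1 = n + 1 by omega]
  rw [hsum]
  field_simp
  push_cast
  ring

theorem statement4 (η ψ q : ℝ) (hη : 0 < η) (hη1 : η ≤ 1) (hψ : 0 < ψ)
    (hq : 0 < q) (hq1 : q ≤ 1) :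
    Tendsto (fun U : ℕ =>
        ((U : ℝ) - 1) * (1 - η) * q * (ψ / U) *
          ∑ k ∈ Finset.range (U - 1),
            (1 / ((k : ℝ) + 1)) * ((U - 2).choose k : ℝ) *
              (η * ψ / U) ^ k * (1 - η * ψ / U) ^ (U - 2 - k))
      atTop (nhds ((1 - η) / η * q * (1 - Real.exp (-(η * ψ))))) :=
  statement4_general η ψ q hη
end

section
/- The function N(η) = ((1-η)/η)·q·(1 - exp(-η·ψ)) is strictly decreasing in η on (0,1) for any fixed q > 0 and ψ > 0. -/
open Real

theorem statement5 (q ψ : ℝ) (hq : 0 < q) (hψ : 0 < ψ) :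
    StrictAntiOn (fun η : ℝ => (1 - η) / η * q * (1 - Real.exp (-(η * ψ))))
      (Set.Ioo 0 1) := by
  have hconv : Convex ℝ (Set.Ioo (0:ℝ) 1) := convex_Ioo 0 1
  apply StrictAntiOn.mono ?_ (le_refl _)
  apply strictAntiOn_of_deriv_neg hconv
  · apply ContinuousOn.mul
    · apply ContinuousOn.mul
      · exact ContinuousOn.div (by fun_prop) (by fun_prop)
          (fun x hx => ne_of_gt hx.1)
      · fun_prop
    · fun_prop
  · intro x hx
    rw [interior_Ioo] at hx
    obtain ⟨hx0, hx1⟩ := hx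
    have h1 : HasDerivAt (fun η : ℝ => (1 - η) / η)
        (((-1) * x - (1 - x) * 1) / x ^ 2) x := by
      exact HasDerivAt.div ((hasDerivAt_id x).const_sub 1) (hasDerivAt_id x) hx0.ne'
    have h2 : HasDerivAt (fun η : ℝ => 1 - Real.exp (-(η * ψ)))
        (Real.exp (-(x * ψ)) * ψ) x := by
      have : HasDerivAt (fun η : ℝ => Real.exp (-(η * ψ)))
          (Real.exp (-(x * ψ)) * (-ψ)) x := by
        have := (((hasDerivAt_id x).mul_const ψ).neg).exp
        simpa using this
      have := this.const_sub 1
      simpa [mul_comm] using this.congr_deriv (by ring)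
    have hf : HasDerivAt (fun η : ℝ => (1 - η) / η * q * (1 - Real.exp (-(η * ψ))))
        ((((-1) * x - (1 - x) * 1) / x ^ 2 * q) * (1 - Real.exp (-(x * ψ)))
          + ((1 - x) / x * q) * (Real.exp (-(x * ψ)) * ψ)) x :=
      (h1.mul_const q).mul h2
    rw [hf.deriv]
    set E := Real.exp (-(x * ψ)) with hE
    have hEpos : 0 < E := Real.exp_pos _
    have hkey : Real.exp (x * ψ) > x * ψ + 1 := by
      have := Real.add_one_lt_exp (x := x * ψ) (by positivity)
      linarith
    have hmul : E * Real.exp (x * ψ) = 1 := by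
      rw [hE, ← Real.exp_add]; simp
    have heq : (((-1) * x - (1 - x) * 1) / x ^ 2 * q) * (1 - E)
        + ((1 - x) / x * q) * (E * ψ)
        = (q * (x * (1 - x) * ψ * E - (1 - E))) / x ^ 2 := by
      field_simp; ring
    rw [heq]
    apply div_neg_of_neg_of_pos _ (by positivity)
    have hxE : x * ψ * E < 1 - E := by nlinarith [Real.exp_pos (x * ψ)]
    have hX : x * (1 - x) * ψ * E - (1 - E) < 0 := by
      nlinarith [mul_nonneg (mul_nonneg (sq_nonneg x) hψ.le) hEpos.le]
    exact mul_neg_of_pos_of_neg hq hX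
end
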